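/- arXiv:2210.16716 — 4 statements merged into one kernel-verified Lean document; each statement's English description precedes it below -/
import Mathlib

section
/- Let H be an N×M complex matrix, σ² > 0, and D an M×M Hermitian matrix. If the supremum over all M×M Hermitian positive semidefinite matrices S of the quantity log₂ det(I_N + (1/σ²) H S Hᴴ) − tr(D S) is finite (bounded from above), then D is positive semidefinite and the range (column space) of Hᴴ is contained in the range of D. -/
/-!
Test the bound on the rank-one matrices `S = t • v vᴴ`, `t ≥ 0`, on which the objective is
`log₂ (1 + t ‖H v‖² / σ²) − t · vᴴ D v`. Since the logarithm is nonnegative, `vᴴ D v < 0`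
would make the objective grow linearly in `t`; and if `D v = 0` but `H v ≠ 0`, it grows like
`log₂ t`. Hence `D ⪰ 0` and `ker D ≤ ker H`; taking orthogonal complements turns the latter
into `range Hᴴ ≤ range Dᴴ = range D`.
-/

open Matrix ComplexOrder

/-- The Lagrangian-style objective `log₂ det(I_N + (1/σ²) H S Hᴴ) − tr(D S)`
(both quantities are real for Hermitian `D` and PSD `S`; we take real parts). -/
noncomputable def dualObj {N M : ℕ} (H : Matrix (Fin N) (Fin M) ℂ) (σ2 : ℝ)
    (D : Matrix (Fin M) (Fin M) ℂ) (S : Matrix (Fin M) (Fin M) ℂ) : ℝ :=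
  Real.logb 2 ((1 + σ2⁻¹ • (H * S * Hᴴ)).det.re) - ((D * S).trace).re

open Filter WithLp

theorem Real.nonneg_of_forall_logb_one_add_mul_sub_le {a d B : ℝ} (ha : 0 ≤ a)
    (h : ∀ t, 0 ≤ t → Real.logb 2 (1 + a * t) - t * d ≤ B) : 0 ≤ d := by
  by_contra! hd
  have hlim : Tendsto (fun t : ℝ => t * -d) atTop atTop :=
    tendsto_id.atTop_mul_const (neg_pos.mpr hd)
  obtain ⟨t, hBt, ht⟩ := ((hlim.eventually_gt_atTop B).and (eventually_ge_atTop 0)).exists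
  have hlog : 0 ≤ Real.logb 2 (1 + a * t) := Real.logb_nonneg one_lt_two (by nlinarith)
  linarith [h t ht]

theorem Real.nonpos_of_forall_logb_one_add_mul_le {a B : ℝ}
    (h : ∀ t, 0 ≤ t → Real.logb 2 (1 + a * t) ≤ B) : a ≤ 0 := by
  by_contra! ha
  have hlim : Tendsto (fun t : ℝ => Real.logb 2 (1 + a * t)) atTop atTop :=
    (Real.tendsto_logb_atTop one_lt_two).comp
      (tendsto_atTop_add_const_left _ _ (tendsto_id.const_mul_atTop ha))
  obtain ⟨t, hBt, ht⟩ := ((hlim.eventually_gt_atTop B).and (eventually_ge_atTop 0)).exists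
  exact (h t ht).not_gt hBt

namespace Matrix

theorem det_one_add_vecMulVec {n R : Type*} [Fintype n] [DecidableEq n] [CommRing R]
    (u v : n → R) : (1 + vecMulVec u v).det = 1 + v ⬝ᵥ u := by
  rw [vecMulVec_eq Unit, det_one_add_replicateCol_mul_replicateRow]

theorem IsHermitian.posSemidef_of_forall_re_nonneg {n 𝕜 : Type*} [Fintype n] [RCLike 𝕜]
    {A : Matrix n n 𝕜} (hA : A.IsHermitian) (h : ∀ x, 0 ≤ RCLike.re (star x ⬝ᵥ A *ᵥ x)) :
    A.PosSemidef :=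
  posSemidef_iff_dotProduct_mulVec.mpr
    ⟨hA, fun x => RCLike.nonneg_iff.mpr ⟨h x, hA.im_star_dotProduct_mulVec_self x⟩⟩

theorem range_toEuclideanLin_conjTranspose {m n 𝕜 : Type*} [Fintype m] [Fintype n]
    [DecidableEq m] [DecidableEq n] [RCLike 𝕜] (A : Matrix m n 𝕜) :
    LinearMap.range Aᴴ.toEuclideanLin = (LinearMap.ker A.toEuclideanLin)ᗮ := by
  rw [toEuclideanLin_conjTranspose_eq_adjoint, LinearMap.orthogonal_ker]

theorem range_mulVecLin_conjTranspose_le {m n k 𝕜 : Type*} [Fintype m] [Fintype n]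
    [Fintype k] [RCLike 𝕜] {A : Matrix m n 𝕜} {B : Matrix k n 𝕜}
    (h : LinearMap.ker B.mulVecLin ≤ LinearMap.ker A.mulVecLin) :
    LinearMap.range Aᴴ.mulVecLin ≤ LinearMap.range Bᴴ.mulVecLin := by
  classical
  rintro _ ⟨x, rfl⟩
  have hker : LinearMap.ker B.toEuclideanLin ≤ LinearMap.ker A.toEuclideanLin := fun v hv =>
    congrArg (toLp 2) (h (show B *ᵥ ofLp v = 0 from congrArg ofLp hv))
  have hx : toLp 2 (Aᴴ *ᵥ x) ∈ LinearMap.range Bᴴ.toEuclideanLin := by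
    rw [range_toEuclideanLin_conjTranspose]
    refine Submodule.orthogonal_le hker ?_
    rw [← range_toEuclideanLin_conjTranspose]
    exact ⟨toLp 2 x, rfl⟩
  obtain ⟨w, hw⟩ := hx
  exact ⟨ofLp w, congrArg ofLp hw⟩

end Matrix

theorem dualObj_smul_vecMulVec {N M : ℕ} (H : Matrix (Fin N) (Fin M) ℂ) (σ2 : ℝ)
    (D : Matrix (Fin M) (Fin M) ℂ) (t : ℝ) (v : Fin M → ℂ) :
    dualObj H σ2 D ((t : ℂ) • vecMulVec v (star v)) =
      Real.logb 2 (1 + σ2⁻¹ * (star (H *ᵥ v) ⬝ᵥ H *ᵥ v).re * t)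
        - t * (star v ⬝ᵥ D *ᵥ v).re := by
  have hHS : H * ((t : ℂ) • vecMulVec v (star v)) * Hᴴ
      = (t : ℂ) • vecMulVec (H *ᵥ v) (star (H *ᵥ v)) := by
    rw [Matrix.mul_smul, Matrix.smul_mul, mul_vecMulVec, vecMulVec_mul, star_mulVec]
  have hdet : (1 + σ2⁻¹ • (H * ((t : ℂ) • vecMulVec v (star v)) * Hᴴ)).det
      = 1 + ((σ2⁻¹ * t : ℝ) : ℂ) * (star (H *ᵥ v) ⬝ᵥ H *ᵥ v) := by
    rw [hHS, ← smul_assoc, Complex.real_smul, ← Complex.ofReal_mul, ← smul_vecMulVec,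
      det_one_add_vecMulVec, dotProduct_smul, smul_eq_mul]
  have htr : (D * ((t : ℂ) • vecMulVec v (star v))).trace = t * (star v ⬝ᵥ D *ᵥ v) := by
    rw [Matrix.mul_smul, trace_smul, mul_vecMulVec, trace_vecMulVec, dotProduct_comm, smul_eq_mul]
  rw [dualObj, hdet, htr, Complex.add_re, Complex.one_re, Complex.re_ofReal_mul,
    Complex.re_ofReal_mul, mul_right_comm]

/-- Lemma 1: if `sup_{S ⪰ 0} [log₂ det(I + (1/σ²) H S Hᴴ) − tr(DS)]`
is bounded from above, then `D ⪰ 0` and `range(Hᴴ) ⊆ range(D)`. -/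
theorem stmt_0 {N M : ℕ} (H : Matrix (Fin N) (Fin M) ℂ) (σ2 : ℝ) (hσ2 : 0 < σ2)
    (D : Matrix (Fin M) (Fin M) ℂ) (hD : D.IsHermitian)
    (hbdd : ∃ B : ℝ, ∀ S : Matrix (Fin M) (Fin M) ℂ, S.PosSemidef →
      dualObj H σ2 D S ≤ B) :
    D.PosSemidef ∧
      LinearMap.range (Hᴴ).mulVecLin ≤ LinearMap.range D.mulVecLin := by
  obtain ⟨B, hB⟩ := hbdd
  have hrankOne : ∀ v t, 0 ≤ t → Real.logb 2 (1 + σ2⁻¹ * (star (H *ᵥ v) ⬝ᵥ H *ᵥ v).re * t)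
      - t * (star v ⬝ᵥ D *ᵥ v).re ≤ B := fun v t ht =>
    dualObj_smul_vecMulVec H σ2 D t v ▸
      hB _ ((posSemidef_vecMulVec_self_star v).smul (Complex.zero_le_real.mpr ht))
  have hgain : ∀ v, 0 ≤ σ2⁻¹ * (star (H *ᵥ v) ⬝ᵥ H *ᵥ v).re := fun v =>
    mul_nonneg (inv_nonneg.mpr hσ2.le) (Complex.nonneg_iff.mp (dotProduct_star_self_nonneg _)).1
  have hPSD : D.PosSemidef := hD.posSemidef_of_forall_re_nonneg fun v =>
    Real.nonneg_of_forall_logb_one_add_mul_sub_le (hgain v) (hrankOne v)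
  have hker : LinearMap.ker D.mulVecLin ≤ LinearMap.ker H.mulVecLin := by
    intro v (hv : D *ᵥ v = 0)
    by_contra hHv
    have hpos : 0 < (star (H *ᵥ v) ⬝ᵥ H *ᵥ v).re :=
      (Complex.pos_iff.mp (dotProduct_star_self_pos_iff.mpr hHv)).1
    refine (mul_pos (inv_pos.mpr hσ2) hpos).not_ge
      (Real.nonpos_of_forall_logb_one_add_mul_le (B := B) fun t ht => ?_)
    simpa [hv] using hrankOne v t ht
  exact ⟨hPSD, hD.eq ▸ range_mulVecLin_conjTranspose_le hker⟩
end

section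
/- Let H be an N×M complex matrix, σ² > 0, and D an M×M Hermitian positive semidefinite matrix such that H v = 0 for every v in the kernel of D (equivalently, range(Hᴴ) ⊆ range(D)). Then the function S ↦ log₂ det(I_N + (1/σ²) H S Hᴴ) − tr(D S) is bounded from above on the set of M×M Hermitian positive semidefinite matrices S. -/
/-!
Since `ker D ⊆ ker H`, `H` factors as `X D`, so `Hᴴ H = D (Xᴴ X) D ≤ c D` in the Loewner order
for some `c ≥ 0`, and hence `tr (H S Hᴴ) ≤ c tr (D S)` for every `S ⪰ 0`. With `t = tr (D S)`,
the crude bound `det B ≤ (tr B)^N` for `B = I + σ⁻² H S Hᴴ ⪰ 0` gives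
`log₂ det B ≤ N log₂ ((N + 1 + c / σ²) (1 + t))`, which grows only logarithmically in `t`;
subtracting `t` therefore leaves a function bounded above.
-/

open Matrix ComplexOrder

open scoped MatrixOrder

theorem LinearMap.exists_comp_eq_of_ker_le {K V V' W : Type*} [DivisionRing K]
    [AddCommGroup V] [Module K V] [AddCommGroup V'] [Module K V'] [AddCommGroup W] [Module K W]
    (f : V →ₗ[K] V') (g : V →ₗ[K] W) (hfg : ker f ≤ ker g) :
    ∃ h : V' →ₗ[K] W, h ∘ₗ f = g := by
  obtain ⟨h, hh⟩ := IsSemisimpleModule.extension_property ((ker f).liftQ f le_rfl)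
    (ker_eq_bot.mp (Submodule.ker_liftQ_eq_bot _ _ _ le_rfl)) ((ker f).liftQ g hfg)
  exact ⟨h, by ext v; simpa using congr($hh (Submodule.Quotient.mk v))⟩

theorem Matrix.exists_eq_mul_of_mulVec_eq_zero {K l m n : Type*} [Field K] [Fintype m]
    [DecidableEq m] [Fintype n] [DecidableEq n] {A : Matrix m n K} {B : Matrix l n K}
    (h : ∀ v, A *ᵥ v = 0 → B *ᵥ v = 0) : ∃ X : Matrix l m K, B = X * A := by
  obtain ⟨g, hg⟩ := (toLin' A).exists_comp_eq_of_ker_le (toLin' B) fun v hv => h v hv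
  refine ⟨LinearMap.toMatrix' g, toLin'.injective ?_⟩
  rw [toLin'_mul, toLin'_toMatrix', hg]

section
variable {m n 𝕜 : Type*} [Fintype m] [Fintype n] [DecidableEq n] [RCLike 𝕜] {A : Matrix n n 𝕜}

theorem Matrix.PosSemidef.spectrum_subset_Icc (hA : A.PosSemidef) :
    spectrum ℝ A ⊆ Set.Icc 0 (RCLike.re A.trace) := by
  rw [hA.1.spectrum_real_eq_range_eigenvalues]
  rintro _ ⟨i, rfl⟩
  refine ⟨hA.eigenvalues_nonneg i, ?_⟩
  rw [hA.1.trace_eq_sum_eigenvalues, map_sum]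
  simp only [RCLike.ofReal_re]
  exact Finset.single_le_sum (fun j _ => hA.eigenvalues_nonneg j) (Finset.mem_univ i)

theorem Matrix.PosSemidef.le_re_trace_smul_one (hA : A.PosSemidef) :
    A ≤ RCLike.re A.trace • (1 : Matrix n n 𝕜) := by
  rw [← Algebra.algebraMap_eq_smul_one]
  exact le_algebraMap_of_spectrum_le fun x hx => (hA.spectrum_subset_Icc hx).2

theorem Matrix.PosSemidef.mul_self_le_re_trace_smul (hA : A.PosSemidef) :
    A * A ≤ RCLike.re A.trace • A := by
  rw [← cfc_const_mul_id (R := ℝ) _ A hA.1.isSelfAdjoint, ← sq,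
    ← cfc_pow_id (R := ℝ) A 2 hA.1.isSelfAdjoint]
  refine cfc_mono fun x hx => ?_
  obtain ⟨hx0, hxt⟩ := hA.spectrum_subset_Icc hx
  nlinarith

theorem Matrix.PosSemidef.trace_mul_nonneg {B : Matrix n n 𝕜} (hA : A.PosSemidef)
    (hB : B.PosSemidef) :
    0 ≤ (A * B).trace := by
  rw [← CFC.sqrt_mul_sqrt_self B hB.nonneg, ← mul_assoc, trace_mul_cycle]
  have hconj := hA.conjTranspose_mul_mul_same (CFC.sqrt B)
  rw [(CFC.sqrt_nonneg B).posSemidef.1.eq] at hconj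
  exact hconj.trace_nonneg

theorem Matrix.PosSemidef.re_det_le_re_trace_pow (hA : A.PosSemidef) :
    RCLike.re A.det ≤ RCLike.re A.trace ^ Fintype.card n := by
  rw [hA.1.det_eq_prod_eigenvalues, hA.1.trace_eq_sum_eigenvalues, map_sum,
    ← RCLike.ofReal_prod, RCLike.ofReal_re]
  simp only [RCLike.ofReal_re]
  calc ∏ i, hA.1.eigenvalues i ≤ ∏ _i : n, ∑ j, hA.1.eigenvalues j :=
        Finset.prod_le_prod (fun i _ => hA.eigenvalues_nonneg i)
          fun i _ => Finset.single_le_sum (fun j _ => hA.eigenvalues_nonneg j) (Finset.mem_univ i)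
    _ = _ := by rw [Finset.prod_const, Finset.card_univ]

theorem Matrix.re_trace_mul_le_of_le {A B S : Matrix n n 𝕜} (hAB : A ≤ B) (hS : S.PosSemidef) :
    RCLike.re (A * S).trace ≤ RCLike.re (B * S).trace := by
  have hdiff := (RCLike.nonneg_iff.mp ((Matrix.le_iff.mp hAB).trace_mul_nonneg hS)).1
  rw [sub_mul, trace_sub, map_sub] at hdiff
  linarith

theorem Matrix.PosSemidef.exists_conjTranspose_mul_self_le_smul {D : Matrix n n 𝕜}
    (hD : D.PosSemidef) {H : Matrix m n 𝕜} (hker : ∀ v, D *ᵥ v = 0 → H *ᵥ v = 0) :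
    ∃ c : ℝ, 0 ≤ c ∧ Hᴴ * H ≤ c • D := by
  obtain ⟨X, rfl⟩ := exists_eq_mul_of_mulVec_eq_zero hker
  have hXX := posSemidef_conjTranspose_mul_self X
  have hr : 0 ≤ RCLike.re (Xᴴ * X).trace := (RCLike.nonneg_iff.mp hXX.trace_nonneg).1
  refine ⟨RCLike.re (Xᴴ * X).trace * RCLike.re D.trace,
    mul_nonneg hr (RCLike.nonneg_iff.mp hD.trace_nonneg).1, ?_⟩
  have hDstar : star D = D := hD.1
  calc (X * D)ᴴ * (X * D) = star D * (Xᴴ * X) * D := by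
        rw [conjTranspose_mul, star_eq_conjTranspose, Matrix.mul_assoc, Matrix.mul_assoc,
          Matrix.mul_assoc]
    _ ≤ star D * (RCLike.re (Xᴴ * X).trace • 1) * D :=
        star_left_conjugate_le_conjugate hXX.le_re_trace_smul_one D
    _ = RCLike.re (Xᴴ * X).trace • (D * D) := by rw [hDstar, mul_smul_comm, mul_one, smul_mul_assoc]
    _ ≤ RCLike.re (Xᴴ * X).trace • (RCLike.re D.trace • D) :=
        smul_le_smul_of_nonneg_left hD.mul_self_le_re_trace_smul hr
    _ = _ := smul_smul _ _ _

end

-- the tangent line of `log` at `a`, multiplied by `a`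
theorem Real.mul_log_le_add_mul_log_sub {a x : ℝ} (ha : 0 ≤ a) (hx : 0 < x) :
    a * Real.log x ≤ x + a * Real.log a - a := by
  rcases ha.eq_or_lt with rfl | ha
  · simpa using hx.le
  have htangent : Real.log x - Real.log a ≤ x / a - 1 := by
    rw [← Real.log_div hx.ne' ha.ne']
    exact Real.log_le_sub_one_of_pos (div_pos hx ha)
  have hscaled := mul_le_mul_of_nonneg_left htangent ha.le
  rw [mul_sub, mul_sub, mul_div_cancel₀ x ha.ne', mul_one] at hscaled
  linarith

theorem Real.exists_logb_sub_le {β : ℝ} (hβ : 1 < β) (n : ℕ) {b : ℝ} (hb : 0 < b) :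
    ∃ C, ∀ d t : ℝ, 0 < d → 0 ≤ t → d ≤ (b * (1 + t)) ^ n → Real.logb β d - t ≤ C := by
  set a := n / Real.log β
  have ha : 0 ≤ a := div_nonneg n.cast_nonneg (Real.log_nonneg hβ.le)
  refine ⟨n * Real.logb β b + (1 + a * Real.log a - a), fun d t hd ht h => ?_⟩
  have hlog : a * Real.log (1 + t) ≤ 1 + t + a * Real.log a - a :=
    Real.mul_log_le_add_mul_log_sub ha (by linarith)
  have hlogb : Real.logb β d ≤ n * Real.logb β b + a * Real.log (1 + t) :=
    calc Real.logb β d ≤ Real.logb β ((b * (1 + t)) ^ n) := Real.logb_le_logb_of_le hβ hd h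
      _ = n * Real.logb β b + a * Real.log (1 + t) := by
        rw [Real.logb_pow, Real.logb_mul hb.ne' (by linarith), Real.logb, Real.logb]
        ring
  linarith

/-- converse direction of Lemma 1: if `D ⪰ 0` and `H v = 0` for every
`v ∈ ker D` (equivalently `range(Hᴴ) ⊆ range(D)`), then the objective
`S ↦ log₂ det(I_N + (1/σ²) H S Hᴴ) − tr(D S)` is bounded from above on the PSD cone. -/
theorem stmt_3 {N M : ℕ} (H : Matrix (Fin N) (Fin M) ℂ) (σ2 : ℝ) (hσ2 : 0 < σ2)
    (D : Matrix (Fin M) (Fin M) ℂ) (hD : D.PosSemidef)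
    (hker : ∀ v : Fin M → ℂ, D.mulVec v = 0 → H.mulVec v = 0) :
    ∃ B : ℝ, ∀ S : Matrix (Fin M) (Fin M) ℂ, S.PosSemidef →
      dualObj H σ2 D S ≤ B := by
  obtain ⟨c, hc0, hc⟩ := hD.exists_conjTranspose_mul_self_le_smul hker
  have hσ2inv : 0 ≤ σ2⁻¹ := inv_nonneg.mpr hσ2.le
  obtain ⟨C, hC⟩ :=
    Real.exists_logb_sub_le one_lt_two N (b := N + 1 + σ2⁻¹ * c) (by positivity)
  refine ⟨C, fun S hS => ?_⟩
  set A := σ2⁻¹ • (H * S * Hᴴ) with hA_def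
  have hA : A.PosSemidef := (hS.mul_mul_conjTranspose_same H).smul hσ2inv
  have ht : 0 ≤ (D * S).trace.re := (RCLike.nonneg_iff.mp (hD.trace_mul_nonneg hS)).1
  have hs : A.trace.re ≤ σ2⁻¹ * c * (D * S).trace.re := by
    have hHS := re_trace_mul_le_of_le hc hS
    rw [smul_mul, trace_smul, RCLike.smul_re] at hHS
    rw [hA_def, trace_smul, trace_mul_cycle, Complex.smul_re, mul_assoc]
    exact mul_le_mul_of_nonneg_left hHS hσ2inv
  refine hC _ _ (RCLike.pos_iff.mp (PosDef.one.add_posSemidef hA).det_pos).1 ht ?_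
  calc (1 + A).det.re ≤ (1 + A).trace.re ^ N := by
        simpa using (PosSemidef.one.add hA).re_det_le_re_trace_pow
    _ = (N + A.trace.re) ^ N := by simp [trace_add]
    _ ≤ _ := by
        have hs0 : 0 ≤ A.trace.re := (RCLike.nonneg_iff.mp hA.trace_nonneg).1
        gcongr
        nlinarith [mul_nonneg hσ2inv hc0]
end

section
/- Let H be an N×M complex matrix, σ² > 0, and D an M×M Hermitian positive semidefinite matrix with H v = 0 for every v in the kernel of D, and let P be the orthogonal projection onto the range of D. Then for every M×M Hermitian positive semidefinite matrix S, the matrix P S P is Hermitian positive semidefinite and log₂ det(I_N + (1/σ²) H S Hᴴ) − tr(D S) = log₂ det(I_N + (1/σ²) H (P S P) Hᴴ) − tr(D (P S P)). Consequently, the supremum of this objective over all PSD S equals its supremum over PSD matrices supported on the range of D. -/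
open Matrix ComplexOrder

private lemma matrix_ext_mulVec {m n : ℕ} {A B : Matrix (Fin m) (Fin n) ℂ}
    (h : ∀ v, A.mulVec v = B.mulVec v) : A = B := by
  ext i j
  have := congrFun (h (Pi.single j 1)) i
  simpa [Matrix.mulVec_single] using this

/-- reduction step of Section IV-A: with `D ⪰ 0`, `Hv = 0` on `ker D`, and
`Pr` the orthogonal projection onto `range(D)` (Hermitian idempotent with range equal to
that of `D`), every PSD `S` satisfies: `Pr S Pr` is PSD, the objective is unchanged when
`S` is replaced by `Pr S Pr`, and hence the supremum over all PSD matrices equals the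
supremum over PSD matrices supported on the range of `D`. -/
theorem stmt_4 {N M : ℕ} (H : Matrix (Fin N) (Fin M) ℂ) (σ2 : ℝ) (hσ2 : 0 < σ2)
    (D : Matrix (Fin M) (Fin M) ℂ) (hD : D.PosSemidef)
    (hker : ∀ v : Fin M → ℂ, D.mulVec v = 0 → H.mulVec v = 0)
    (Pr : Matrix (Fin M) (Fin M) ℂ) (hPrH : Pr.IsHermitian) (hPr2 : Pr * Pr = Pr)
    (hPrRange : LinearMap.range Pr.mulVecLin = LinearMap.range D.mulVecLin) :
    (∀ S : Matrix (Fin M) (Fin M) ℂ, S.PosSemidef →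
      (Pr * S * Pr).PosSemidef ∧ dualObj H σ2 D S = dualObj H σ2 D (Pr * S * Pr)) ∧
    sSup {x : ℝ | ∃ S : Matrix (Fin M) (Fin M) ℂ, S.PosSemidef ∧ dualObj H σ2 D S = x} =
      sSup {x : ℝ | ∃ S : Matrix (Fin M) (Fin M) ℂ,
        S.PosSemidef ∧ Pr * S * Pr = S ∧ dualObj H σ2 D S = x} := by
  -- Pr fixes the range of D: Pr * D = D
  have hPrD : Pr * D = D := by
    apply matrix_ext_mulVec
    intro v
    have hmem : D.mulVec v ∈ LinearMap.range Pr.mulVecLin := by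
      rw [hPrRange]; exact ⟨v, rfl⟩
    obtain ⟨w, hw⟩ := hmem
    simp only [Matrix.mulVecLin_apply] at hw
    rw [← Matrix.mulVec_mulVec, ← hw, Matrix.mulVec_mulVec, hPr2]
  have hDPr : D * Pr = D := by
    have := congrArg Matrix.conjTranspose hPrD
    rwa [Matrix.conjTranspose_mul, hPrH.eq, hD.isHermitian.eq] at this
  -- H * Pr = H, since H kills (1 - Pr) v which lies in ker D
  have hHPr : H * Pr = H := by
    apply matrix_ext_mulVec
    intro v
    have hDz : D.mulVec (v - Pr.mulVec v) = 0 := by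
      rw [Matrix.mulVec_sub, Matrix.mulVec_mulVec, hDPr, sub_self]
    have := hker _ hDz
    rw [Matrix.mulVec_sub, sub_eq_zero] at this
    rw [← Matrix.mulVec_mulVec]; exact this.symm
  have hPrHt : Pr * Hᴴ = Hᴴ := by
    have := congrArg Matrix.conjTranspose hHPr
    rwa [Matrix.conjTranspose_mul, hPrH.eq] at this
  -- the objective is invariant
  have hobj : ∀ S : Matrix (Fin M) (Fin M) ℂ,
      dualObj H σ2 D S = dualObj H σ2 D (Pr * S * Pr) := by
    intro S
    unfold dualObj
    have h1 : H * (Pr * S * Pr) * Hᴴ = H * S * Hᴴ := by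
      calc H * (Pr * S * Pr) * Hᴴ = (H * Pr) * S * (Pr * Hᴴ) := by
            simp only [Matrix.mul_assoc]
        _ = H * S * Hᴴ := by rw [hHPr, hPrHt]
    have h2 : (D * (Pr * S * Pr)).trace = (D * S).trace := by
      calc (D * (Pr * S * Pr)).trace = ((D * Pr * S) * Pr).trace := by
            simp only [Matrix.mul_assoc]
        _ = (Pr * (D * Pr * S)).trace := Matrix.trace_mul_comm _ _
        _ = ((Pr * D) * Pr * S).trace := by simp only [Matrix.mul_assoc]
        _ = (D * S).trace := by rw [hPrD, hDPr]
    rw [h1, h2]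
  have hmain : ∀ S : Matrix (Fin M) (Fin M) ℂ, S.PosSemidef →
      (Pr * S * Pr).PosSemidef ∧ dualObj H σ2 D S = dualObj H σ2 D (Pr * S * Pr) := by
    intro S hS
    refine ⟨?_, hobj S⟩
    have := hS.conjTranspose_mul_mul_same Pr
    rwa [hPrH.eq] at this
  refine ⟨hmain, ?_⟩
  congr 1
  ext x
  constructor
  · rintro ⟨S, hS, hx⟩
    refine ⟨Pr * S * Pr, (hmain S hS).1, ?_, by rw [← hobj S, hx]⟩
    calc Pr * (Pr * S * Pr) * Pr = (Pr * Pr) * S * (Pr * Pr) := by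
          simp only [Matrix.mul_assoc]
      _ = Pr * S * Pr := by rw [hPr2]
  · rintro ⟨S, hS, _, hx⟩
    exact ⟨S, hS, hx⟩
end

section
/- Let r and r̃ ≤ r be positive integers, σ² > 0, and λ₁, …, λ_r̃ > 0. Consider maximizing f(S̃) = log₂ det(I_r + (1/σ²) Λ S̃) − tr(S̃) over r×r Hermitian positive semidefinite matrices S̃, where Λ = diag(λ₁², …, λ_r̃², 0, …, 0). Then the diagonal matrix S̃* = diag(p̃₁, …, p̃_r̃, 0, …, 0) with p̃_k = max(1/ln 2 − σ²/λ_k², 0) for k = 1, …, r̃ is a global maximizer: f(S̃) ≤ f(S̃*) for every Hermitian PSD S̃. -/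
/-!
With `Q = diag(√eᵢ)`, Sylvester's identity gives `det(I + diag(e) S) = det(I + Q S Q)`, and
Hadamard's inequality bounds this by `∏ (1 + eᵢ sᵢ)`, where `sᵢ = Sᵢᵢ ≥ 0` and `tr S = ∑ sᵢ`.
The objective is therefore dominated by a sum of concave scalar functions
`log_b (1 + eᵢ sᵢ) - sᵢ`, each maximised at the water-filling level; the diagonal `S*` attains
this bound.
-/

open Matrix ComplexOrder

/-- A zero gain gets zero power: `max (1 / ln b - 1 / c) 0` alone would give `1 / ln b` there,
because `1 / 0 = 0`. -/
noncomputable def waterFill (b c : ℝ) : ℝ :=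
  if 0 < c then max (1 / Real.log b - 1 / c) 0 else 0

lemma waterFill_nonneg (b c : ℝ) : 0 ≤ waterFill b c := by
  unfold waterFill
  split_ifs <;> simp

lemma Real.log_sub_log_le_sub_div {x y : ℝ} (hx : 0 < x) (hy : 0 < y) :
    Real.log x - Real.log y ≤ (x - y) / y := by
  have h := Real.log_le_sub_one_of_pos (div_pos hx hy)
  rw [sub_div, div_self hy.ne']
  rwa [Real.log_div hx.ne' hy.ne'] at h

/-- `s ↦ log_b (1 + c s) - s` is concave with stationary point `1 / ln b - 1 / c`. -/
theorem logb_one_add_mul_sub_le_waterFill {b c s : ℝ} (hb : 1 < b) (hc : 0 ≤ c) (hs : 0 ≤ s) :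
    Real.logb b (1 + c * s) - s ≤ Real.logb b (1 + c * waterFill b c) - waterFill b c := by
  rcases hc.eq_or_lt with rfl | hc
  · simpa [waterFill] using hs
  set p := waterFill b c with hp_def
  have hp : 0 ≤ p := waterFill_nonneg b c
  have hlogb : 0 < Real.log b := Real.log_pos hb
  have slope : c * (s - p) / (1 + c * p) ≤ (s - p) * Real.log b := by
    rcases le_total (1 / c) (1 / Real.log b) with h | h
    · have hlevel : 1 + c * p = c / Real.log b := by
        rw [hp_def, waterFill, if_pos hc, max_eq_left (sub_nonneg.2 h)]
        field_simp
        ring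
      rw [hlevel, div_div_eq_mul_div, mul_assoc, mul_div_cancel_left₀ _ hc.ne']
    · have hp0 : p = 0 := by
        rw [hp_def, waterFill, if_pos hc, max_eq_right (sub_nonpos.2 h)]
      have hcb : c ≤ Real.log b := (one_div_le_one_div hlogb hc).1 h
      rw [hp0, mul_zero, add_zero, div_one, sub_zero]
      nlinarith
  have hlog : Real.log (1 + c * s) - Real.log (1 + c * p) ≤ (s - p) * Real.log b :=
    calc _ ≤ (1 + c * s - (1 + c * p)) / (1 + c * p) :=
          Real.log_sub_log_le_sub_div (by positivity) (by positivity)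
      _ = c * (s - p) / (1 + c * p) := by ring
      _ ≤ _ := slope
  have hdiv := (div_le_iff₀ hlogb).2 hlog
  rw [sub_div] at hdiv
  unfold Real.logb
  linarith

lemma Real.prod_le_one_of_sum_eq_card {ι : Type*} [Fintype ι] {μ : ι → ℝ} (hμ : ∀ i, 0 ≤ μ i)
    (hsum : ∑ i, μ i = Fintype.card ι) : ∏ i, μ i ≤ 1 :=
  calc ∏ i, μ i ≤ ∏ i, Real.exp (μ i - 1) :=
        Finset.prod_le_prod (fun i _ => hμ i) fun i _ => by linarith [Real.add_one_le_exp (μ i - 1)]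
    _ = 1 := by
        rw [← Real.exp_sum, Finset.sum_sub_distrib, hsum]
        simp

namespace Matrix

variable {ι 𝕜 : Type*} [DecidableEq ι] [RCLike 𝕜]

lemma conjTranspose_diagonal_ofReal (d : ι → ℝ) :
    (diagonal fun i => (d i : 𝕜))ᴴ = diagonal fun i => (d i : 𝕜) := by
  rw [diagonal_conjTranspose]
  congr 1
  ext i
  simp

variable [Fintype ι]

lemma diagonal_mul_mul_diagonal_apply_self (d : ι → 𝕜) (A : Matrix ι ι 𝕜) (i : ι) :
    (diagonal d * A * diagonal d) i i = d i * A i i * d i := by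
  rw [mul_diagonal, diagonal_mul]

lemma PosSemidef.re_det_le_one_of_diag_eq_one {B : Matrix ι ι 𝕜} (hB : B.PosSemidef)
    (hdiag : ∀ i, B i i = 1) : RCLike.re B.det ≤ 1 := by
  have htrace : ∑ i, hB.1.eigenvalues i = Fintype.card ι := by
    have h := congrArg RCLike.re hB.1.trace_eq_sum_eigenvalues
    simpa [trace, hdiag] using h.symm
  rw [hB.1.det_eq_prod_eigenvalues, ← RCLike.ofReal_prod, RCLike.ofReal_re]
  exact Real.prod_le_one_of_sum_eq_card hB.eigenvalues_nonneg htrace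

/-- **Hadamard's inequality**, reduced by normalising the diagonal to `1` to AM-GM on the
eigenvalues. -/
theorem PosDef.re_det_le_prod_diag {A : Matrix ι ι 𝕜} (hA : A.PosDef) :
    RCLike.re A.det ≤ ∏ i, RCLike.re (A i i) := by
  set a : ι → ℝ := fun i => RCLike.re (A i i)
  have ha : ∀ i, 0 < a i := fun i => (RCLike.pos_iff.1 hA.diag_pos).1
  have hsqrt : ∀ i, (√(a i))⁻¹ * (√(a i))⁻¹ = (a i)⁻¹ := fun i => by
    rw [← mul_inv, Real.mul_self_sqrt (ha i).le]
  set D : Matrix ι ι 𝕜 := diagonal fun i => ((√(a i))⁻¹ : ℝ)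
  have hB : (D * A * D).PosSemidef := by
    have h := hA.posSemidef.mul_mul_conjTranspose_same D
    rwa [conjTranspose_diagonal_ofReal] at h
  have hBdiag : ∀ i, (D * A * D) i i = 1 := fun i => by
    rw [diagonal_mul_mul_diagonal_apply_self, ← hA.1.coe_re_apply_self i, mul_right_comm,
      ← RCLike.ofReal_mul, hsqrt, ← RCLike.ofReal_mul, inv_mul_cancel₀ (ha i).ne',
      RCLike.ofReal_one]
  have hdetB : (D * A * D).det = ((∏ i, a i)⁻¹ : ℝ) * A.det := by
    rw [det_mul, det_mul, mul_right_comm, det_diagonal, ← RCLike.ofReal_prod,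
      ← RCLike.ofReal_mul, ← Finset.prod_mul_distrib]
    simp only [hsqrt, Finset.prod_inv_distrib]
  have h := hB.re_det_le_one_of_diag_eq_one hBdiag
  rwa [hdetB, RCLike.re_ofReal_mul, inv_mul_le_iff₀ (Finset.prod_pos fun i _ => ha i),
    mul_one] at h

/-- Sylvester's identity turns `1 + diag(e) A` into the positive definite `1 + Q A Q`,
`Q = diag(√eᵢ)`, to which Hadamard's inequality applies. -/
theorem PosSemidef.re_det_one_add_diagonal_mul_mem_Ioc {e : ι → ℝ} (he : ∀ i, 0 ≤ e i)
    {A : Matrix ι ι 𝕜} (hA : A.PosSemidef) :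
    RCLike.re (1 + diagonal (fun i => (e i : 𝕜)) * A).det ∈
      Set.Ioc 0 (∏ i, (1 + e i * RCLike.re (A i i))) := by
  set Q : Matrix ι ι 𝕜 := diagonal fun i => (√(e i) : 𝕜)
  have hdet : (1 + diagonal (fun i => (e i : 𝕜)) * A).det = (1 + Q * A * Q).det := by
    have hQQ : Q * Q = diagonal fun i => (e i : 𝕜) := by
      simp only [Q, diagonal_mul_diagonal, ← RCLike.ofReal_mul, Real.mul_self_sqrt (he _)]
    rw [← hQQ, Matrix.mul_assoc, det_one_add_mul_comm, Matrix.mul_assoc]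
  have hM : (1 + Q * A * Q).PosDef := by
    have hQAQ := hA.mul_mul_conjTranspose_same Q
    rw [conjTranspose_diagonal_ofReal] at hQAQ
    exact PosDef.one.add_posSemidef hQAQ
  have hMdiag : ∀ i, RCLike.re ((1 + Q * A * Q) i i) = 1 + e i * RCLike.re (A i i) := fun i => by
    rw [add_apply, diagonal_mul_mul_diagonal_apply_self, ← hA.1.coe_re_apply_self i,
      mul_right_comm, ← RCLike.ofReal_mul, Real.mul_self_sqrt (he i), ← RCLike.ofReal_mul]
    simp
  rw [hdet]
  refine ⟨(RCLike.pos_iff.1 hM.det_pos).1, ?_⟩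
  simpa only [hMdiag] using hM.re_det_le_prod_diag

theorem PosSemidef.logb_det_one_add_diagonal_mul_sub_trace_le {b : ℝ} (hb : 1 < b)
    {e : ι → ℝ} (he : ∀ i, 0 ≤ e i) {A : Matrix ι ι 𝕜} (hA : A.PosSemidef) :
    Real.logb b (RCLike.re (1 + diagonal (fun i => (e i : 𝕜)) * A).det) - RCLike.re A.trace ≤
      Real.logb b (RCLike.re (1 + diagonal (fun i => (e i : 𝕜)) *
          diagonal fun i => (waterFill b (e i) : 𝕜)).det) -
        RCLike.re (diagonal fun i => (waterFill b (e i) : 𝕜)).trace := by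
  set s : ι → ℝ := fun i => RCLike.re (A i i)
  set w : ι → ℝ := fun i => waterFill b (e i)
  have hs : ∀ i, 0 ≤ s i := fun i => (RCLike.nonneg_iff.1 hA.diag_nonneg).1
  have hw : ∀ i, 0 ≤ w i := fun i => waterFill_nonneg b (e i)
  have hdetP : RCLike.re (1 + diagonal (fun i => (e i : 𝕜)) * diagonal fun i => (w i : 𝕜)).det =
      ∏ i, (1 + e i * w i) := by
    rw [diagonal_mul_diagonal, ← diagonal_one, diagonal_add, det_diagonal]
    norm_cast
  obtain ⟨hpos, hle⟩ := hA.re_det_one_add_diagonal_mul_mem_Ioc he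
  calc _ ≤ Real.logb b (∏ i, (1 + e i * s i)) - ∑ i, s i := by
        rw [trace, map_sum]
        exact sub_le_sub_right (Real.logb_le_logb_of_le hb hpos hle) _
    _ = ∑ i, (Real.logb b (1 + e i * s i) - s i) := by
        rw [Real.logb_prod _ _ fun i _ => by have := he i; have := hs i; positivity,
          Finset.sum_sub_distrib]
    _ ≤ ∑ i, (Real.logb b (1 + e i * w i) - w i) :=
        Finset.sum_le_sum fun i _ => logb_one_add_mul_sub_le_waterFill hb (he i) (hs i)
    _ = _ := by
        rw [Finset.sum_sub_distrib, ← Real.logb_prod _ _ fun i _ => by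
          have := he i; have := hw i; positivity, hdetP, trace_diagonal, ← RCLike.ofReal_sum,
          RCLike.ofReal_re]

end Matrix

theorem stmt_9_general (r rt : ℕ)
    (σ2 : ℝ) (hσ2 : 0 < σ2) (lam : Fin rt → ℝ) (hlam : ∀ k, 0 < lam k) :
    ∀ St : Matrix (Fin r) (Fin r) ℂ, St.PosSemidef →
      Real.logb 2 ((1 + σ2⁻¹ •
          ((Matrix.diagonal fun i : Fin r =>
            if h : (i : ℕ) < rt then ((lam ⟨i, h⟩ ^ 2 : ℝ) : ℂ) else 0) * St)).det.re)
        - (St.trace).re ≤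
      Real.logb 2 ((1 + σ2⁻¹ •
          ((Matrix.diagonal fun i : Fin r =>
            if h : (i : ℕ) < rt then ((lam ⟨i, h⟩ ^ 2 : ℝ) : ℂ) else 0) *
           (Matrix.diagonal fun i : Fin r =>
            if h : (i : ℕ) < rt then
              ((max (1 / Real.log 2 - σ2 / lam ⟨i, h⟩ ^ 2) 0 : ℝ) : ℂ)
            else 0))).det.re)
        - ((Matrix.diagonal fun i : Fin r =>
            if h : (i : ℕ) < rt then
              ((max (1 / Real.log 2 - σ2 / lam ⟨i, h⟩ ^ 2) 0 : ℝ) : ℂ)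
            else 0 : Matrix (Fin r) (Fin r) ℂ).trace).re := by
  intro St hSt
  set e : Fin r → ℝ := fun i => if h : (i : ℕ) < rt then lam ⟨i, h⟩ ^ 2 / σ2 else 0
  have he : ∀ i, 0 ≤ e i := fun i => by
    simp only [e]
    split_ifs
    · positivity
    · rfl
  have hgain : (σ2⁻¹ • Matrix.diagonal fun i : Fin r =>
      if h : (i : ℕ) < rt then ((lam ⟨i, h⟩ ^ 2 : ℝ) : ℂ) else 0) =
        diagonal fun i => (e i : ℂ) := by
    rw [← diagonal_smul]
    congr 1
    ext i
    by_cases h : (i : ℕ) < rt <;> simp [e, h, div_eq_inv_mul]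
  have hpower : (fun i : Fin r => if h : (i : ℕ) < rt then
      ((max (1 / Real.log 2 - σ2 / lam ⟨i, h⟩ ^ 2) 0 : ℝ) : ℂ) else 0) =
        fun i => (waterFill 2 (e i) : ℂ) := by
    ext i
    simp only [e]
    split_ifs with h
    · have := hlam ⟨i, h⟩
      rw [waterFill, if_pos (by positivity), one_div_div]
    · simp [waterFill]
  rw [← smul_mul, ← smul_mul, hgain, hpower]
  exact hSt.logb_det_one_add_diagonal_mul_sub_trace_le one_lt_two he

/-- solution of the inner Lagrangian maximization (19): with
`Λ = diag(λ₁², …, λ_r̃², 0, …, 0)`, the diagonal matrix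
`S̃* = diag(p̃₁, …, p̃_r̃, 0, …, 0)` with `p̃_k = max(1/ln 2 − σ²/λ_k², 0)` globally
maximizes `f(S̃) = log₂ det(I_r + (1/σ²) Λ S̃) − tr(S̃)` over Hermitian PSD `S̃`. -/
theorem stmt_9 (r rt : ℕ) (hr : 0 < r) (hrt : 0 < rt) (hle : rt ≤ r)
    (σ2 : ℝ) (hσ2 : 0 < σ2) (lam : Fin rt → ℝ) (hlam : ∀ k, 0 < lam k) :
    ∀ St : Matrix (Fin r) (Fin r) ℂ, St.PosSemidef →
      Real.logb 2 ((1 + σ2⁻¹ •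
          ((Matrix.diagonal fun i : Fin r =>
            if h : (i : ℕ) < rt then ((lam ⟨i, h⟩ ^ 2 : ℝ) : ℂ) else 0) * St)).det.re)
        - (St.trace).re ≤
      Real.logb 2 ((1 + σ2⁻¹ •
          ((Matrix.diagonal fun i : Fin r =>
            if h : (i : ℕ) < rt then ((lam ⟨i, h⟩ ^ 2 : ℝ) : ℂ) else 0) *
           (Matrix.diagonal fun i : Fin r =>
            if h : (i : ℕ) < rt then
              ((max (1 / Real.log 2 - σ2 / lam ⟨i, h⟩ ^ 2) 0 : ℝ) : ℂ)
            else 0))).det.re)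
        - ((Matrix.diagonal fun i : Fin r =>
            if h : (i : ℕ) < rt then
              ((max (1 / Real.log 2 - σ2 / lam ⟨i, h⟩ ^ 2) 0 : ℝ) : ℂ)
            else 0 : Matrix (Fin r) (Fin r) ℂ).trace).re :=
  stmt_9_general r rt σ2 hσ2 lam hlam
end
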